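/- If Q ⊆ P are prime implication filters of an MV-algebra, then ℓ(P) ⊆ ℓ(Q), where ℓ(F) denotes the implication filter generated by {x → f : f ∈ F, x ∉ F}. -/

import Mathlib

/-- An MV-algebra `(α, ⊕, ¬, 0)` with the standard axioms. -/
class MV (α : Type*) extends Add α, Neg α, Zero α where
  add_assoc : ∀ a b c : α, a + (b + c) = (a + b) + c
  add_comm : ∀ a b : α, a + b = b + a
  add_zero : ∀ a : α, a + 0 = a
  neg_neg : ∀ a : α, - -a = a
  add_neg_zero : ∀ a : α, a + -(0 : α) = -(0 : α)
  luk : ∀ a b : α, -(-a + b) + b = -(-b + a) + a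

namespace MV

variable {α : Type*} [MV α]

/-- The top element `1 = ¬0`. -/
def one (α : Type*) [MV α] : α := -(0 : α)

/-- Implication `x → y = ¬x ⊕ y`. -/
def imp (a b : α) : α := -a + b

/-- Strong conjunction `x ⊗ y = ¬(¬x ⊕ ¬y)`. -/
def otimes (a b : α) : α := -(-a + -b)

/-- Join `x ∨ y = (x → y) → y`. -/
def sup (a b : α) : α := imp (imp a b) b

/-- Meet `x ∧ y = ¬(¬x ∨ ¬y)`. -/
def inf (a b : α) : α := -(sup (-a) (-b))

/-- Order: `x ≤ y` iff `x → y = 1`. -/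
def le (a b : α) : Prop := imp a b = one α

/-- Strict order. -/
def lt (a b : α) : Prop := le a b ∧ a ≠ b

/-- `n`-fold `⊗`-power. -/
def pow (a : α) : ℕ → α
  | 0 => one α
  | n + 1 => otimes a (pow a n)

/-- An implication filter: a lattice filter closed under `⊗`. -/
def IsImpFilter (F : Set α) : Prop :=
  one α ∈ F ∧ (∀ x ∈ F, ∀ y : α, le x y → y ∈ F) ∧
    (∀ x ∈ F, ∀ y ∈ F, inf x y ∈ F) ∧ (∀ x ∈ F, ∀ y ∈ F, otimes x y ∈ F)

/-- A prime implication filter: proper and `x ∨ y ∈ F → x ∈ F ∨ y ∈ F`. -/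
def IsPrime (F : Set α) : Prop :=
  IsImpFilter F ∧ F ≠ Set.univ ∧ ∀ x y : α, sup x y ∈ F → x ∈ F ∨ y ∈ F

/-- A minimal prime implication filter. -/
def IsMinimalPrime (F : Set α) : Prop :=
  IsPrime F ∧ ∀ G : Set α, IsPrime G → G ⊆ F → G = F

/-- A maximal proper implication filter. -/
def IsMaximal (F : Set α) : Prop :=
  IsImpFilter F ∧ F ≠ Set.univ ∧
    ∀ G : Set α, IsImpFilter G → G ≠ Set.univ → F ⊆ G → G = F

/-- A counit: `u < 1` joining to `1` with some `v < 1`. -/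
def IsCounit (u : α) : Prop :=
  lt u (one α) ∧ ∃ v : α, lt v (one α) ∧ sup u v = one α

/-- The implication filter generated by a set. -/
def gen (S : Set α) : Set α := ⋂₀ {F : Set α | IsImpFilter F ∧ S ⊆ F}

/-- The Conrad filter: the implication filter generated by all counits. -/
def conrad (α : Type*) [MV α] : Set α := gen {u : α | IsCounit u}

/-- The localizing filter `ℓ(P)`, generated by `{x → p : p ∈ P, x ∉ P}`. -/
def locFilter (P : Set α) : Set α :=
  gen {z : α | ∃ x : α, x ∉ P ∧ ∃ p ∈ P, z = imp x p}

end MV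

open MV

/-!
Let `x → p` be a generator of `ℓ(P)`, so `x ∉ P` and `p ∈ P`. Then `p → x ∉ P`, since otherwise
`x ∈ P` by modus ponens; a fortiori `p → x ∉ Q`. Prelinearity `(x → p) ∨ (p → x) = 1 ∈ Q` and
primality of `Q` therefore give `x → p ∈ Q`, so `(p → x) → (x → p)` is a generator of `ℓ(Q)`. It
lies below `x → p`, because `((p → x) → (x → p)) → (x → p) = (p → x) ∨ (x → p) = 1`.

For prelinearity, put `c = x ∨ y` and `z = (c → x) ∨ (c → y)`. Then `¬c ≤ z`, say `z = ¬c ⊕ w`,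
and `c = x ∨ y ≤ c ⊗ z = w ⊗ (w → c) ≤ w`, whence `z = 1`.
-/

namespace MV

variable {α : Type*} [MV α]

theorem imp_def (a b : α) : imp a b = -a + b := rfl

theorem sup_def (a b : α) : sup a b = -(-a + b) + b := rfl

theorem le_def (a b : α) : le a b ↔ -a + b = one α := Iff.rfl

protected theorem add_one (a : α) : a + one α = one α := MV.add_neg_zero a

protected theorem one_add (a : α) : one α + a = one α := by
  rw [MV.add_comm]; exact MV.add_one a

protected theorem zero_add (a : α) : (0 : α) + a = a := by
  rw [MV.add_comm]; exact MV.add_zero a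

protected theorem neg_one : -(one α) = (0 : α) := MV.neg_neg 0

protected theorem neg_add_self (a : α) : -a + a = one α := by
  simpa only [MV.add_one, MV.neg_one, MV.zero_add] using (MV.luk a (one α)).symm

protected theorem add_neg_self (a : α) : a + -a = one α := by
  rw [MV.add_comm]; exact MV.neg_add_self a

theorem eq_one_of_one_le {a : α} (h : le (one α) a) : a = one α := by
  rwa [le_def, MV.neg_one, MV.zero_add] at h

protected theorem sup_comm (a b : α) : sup a b = sup b a := MV.luk a b

protected theorem sup_eq_left_of_le {a b : α} (h : le b a) : sup a b = a := by
  rw [MV.sup_comm, sup_def, (le_def b a).1 h, MV.neg_one, MV.zero_add]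

protected theorem le_add (a z : α) : le a (a + z) := by
  rw [le_def, MV.add_assoc, MV.neg_add_self, MV.one_add]

protected theorem le_iff_exists_add {a b : α} : le a b ↔ ∃ z, b = a + z := by
  refine ⟨fun h => ⟨-(-b + a), ?_⟩, fun ⟨z, hz⟩ => hz ▸ MV.le_add a z⟩
  rw [MV.add_comm, ← sup_def, MV.sup_eq_left_of_le h]

protected theorem le_trans {a b c : α} (hab : le a b) (hbc : le b c) : le a c := by
  obtain ⟨z, rfl⟩ := MV.le_iff_exists_add.1 hab
  obtain ⟨w, rfl⟩ := MV.le_iff_exists_add.1 hbc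
  exact MV.le_iff_exists_add.2 ⟨z + w, (MV.add_assoc a z w).symm⟩

protected theorem add_le_add_left {a b : α} (c : α) (h : le a b) : le (c + a) (c + b) := by
  obtain ⟨z, rfl⟩ := MV.le_iff_exists_add.1 h
  exact MV.le_iff_exists_add.2 ⟨z, MV.add_assoc c a z⟩

protected theorem add_le_add_right {a b : α} (c : α) (h : le a b) : le (a + c) (b + c) := by
  rw [MV.add_comm a c, MV.add_comm b c]; exact MV.add_le_add_left c h

protected theorem neg_le_neg {a b : α} (h : le a b) : le (-b) (-a) := by
  rwa [le_def, MV.neg_neg, MV.add_comm]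

theorem imp_le_imp_right {a b : α} (c : α) (h : le a b) : le (imp b c) (imp a c) :=
  MV.add_le_add_right c (MV.neg_le_neg h)

theorem otimes_le_left (a b : α) : le (otimes a b) a := by
  rw [le_def, otimes, MV.neg_neg, MV.add_comm, MV.add_assoc, MV.add_neg_self, MV.one_add]

theorem otimes_le_otimes_left (c : α) {a b : α} (h : le a b) : le (otimes c a) (otimes c b) :=
  MV.neg_le_neg (MV.add_le_add_left (-c) (MV.neg_le_neg h))

protected theorem le_sup_right (a b : α) : le b (sup a b) := by
  rw [sup_def, MV.add_comm]; exact MV.le_add b _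

protected theorem le_sup_left (a b : α) : le a (sup a b) := by
  rw [MV.sup_comm]; exact MV.le_sup_right b a

theorem sup_le_sup_right {a b : α} (c : α) (h : le a b) : le (sup a c) (sup b c) :=
  MV.add_le_add_right c (MV.neg_le_neg (imp_le_imp_right c h))

protected theorem sup_le {a b c : α} (hac : le a c) (hbc : le b c) : le (sup a b) c := by
  rw [MV.sup_comm, ← MV.sup_eq_left_of_le hac]
  exact sup_le_sup_right a hbc

protected theorem sup_le_sup {a a' b b' : α} (ha : le a a') (hb : le b b') :
    le (sup a b) (sup a' b') :=
  MV.sup_le (MV.le_trans ha (MV.le_sup_left a' b')) (MV.le_trans hb (MV.le_sup_right a' b'))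

theorem otimes_imp_eq (a b : α) : otimes a (imp a b) = -(-(a + -b) + -b) := by
  have h := MV.luk (-b) (-a)
  rw [MV.neg_neg, MV.neg_neg] at h
  rw [otimes, imp_def, MV.add_comm (-a) (-(-a + b)), MV.add_comm (-a) b, h]

-- `a ⊗ (a → b)` is the meet `a ∧ b`.
theorem otimes_imp_comm (a b : α) : otimes a (imp a b) = otimes b (imp b a) := by
  have h := MV.luk (-a) (-b)
  rw [MV.neg_neg, MV.neg_neg] at h
  rw [otimes_imp_eq, otimes_imp_eq, h]

theorem otimes_imp_le (a b : α) : le (otimes a (imp a b)) b := by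
  rw [otimes_imp_comm]; exact otimes_le_left b _

theorem otimes_imp_of_le {a b : α} (h : le b a) : otimes a (imp a b) = b := by
  obtain ⟨w, rfl⟩ := MV.le_iff_exists_add.1 h
  have hb : b + w + -b = one α := by
    rw [MV.add_comm, MV.add_assoc, MV.neg_add_self, MV.one_add]
  rw [otimes_imp_eq, hb, MV.neg_one, MV.zero_add, MV.neg_neg]

theorem sup_imp_sup_eq_one (x y : α) : sup (imp (sup x y) x) (imp (sup x y) y) = one α := by
  set c := sup x y
  set z := sup (imp c x) (imp c y) with hz
  have hxc : le x c := MV.le_sup_left x y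
  have hyc : le y c := MV.le_sup_right x y
  obtain ⟨w, hw⟩ : ∃ w, z = -c + w :=
    MV.le_iff_exists_add.1 (MV.le_trans (MV.le_add (-c) x) (MV.le_sup_left _ _))
  have hc_le_otimes : le c (otimes c z) := by
    refine MV.sup_le ?_ ?_
    · simpa only [← hz, otimes_imp_of_le hxc] using
        otimes_le_otimes_left c (MV.le_sup_left (imp c x) (imp c y))
    · simpa only [← hz, otimes_imp_of_le hyc] using
        otimes_le_otimes_left c (MV.le_sup_right (imp c x) (imp c y))
  have hc_le_w : le c w := by
    refine MV.le_trans hc_le_otimes ?_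
    rw [hw, ← imp_def, otimes_imp_comm]
    exact otimes_le_left w _
  obtain ⟨s, hs⟩ := MV.le_iff_exists_add.1 hc_le_w
  rw [hw, hs, MV.add_assoc, MV.neg_add_self, MV.one_add]

theorem sup_imp_imp_eq_one (x y : α) : sup (imp x y) (imp y x) = one α := by
  refine eq_one_of_one_le ?_
  rw [← sup_imp_sup_eq_one y x]
  exact MV.sup_le_sup (imp_le_imp_right y (MV.le_sup_right y x))
    (imp_le_imp_right x (MV.le_sup_left y x))

theorem IsImpFilter.mem_of_le {F : Set α} (hF : IsImpFilter F) {a b : α} (ha : a ∈ F)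
    (hab : le a b) : b ∈ F :=
  hF.2.1 a ha b hab

theorem IsImpFilter.mem_of_imp_mem {F : Set α} (hF : IsImpFilter F) {a b : α} (ha : a ∈ F)
    (hab : imp a b ∈ F) : b ∈ F :=
  hF.mem_of_le (hF.2.2.2 a ha _ hab) (otimes_imp_le a b)

theorem subset_gen (S : Set α) : S ⊆ gen S :=
  fun _ hs _ hF => hF.2 hs

theorem gen_subset {S F : Set α} (hF : IsImpFilter F) (hS : S ⊆ F) : gen S ⊆ F :=
  fun _ hx => hx F ⟨hF, hS⟩

theorem isImpFilter_gen (S : Set α) : IsImpFilter (gen S) :=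
  ⟨fun _ hF => hF.1.1,
    fun _ hx y hxy F hF => hF.1.2.1 _ (hx F hF) y hxy,
    fun _ hx _ hy F hF => hF.1.2.2.1 _ (hx F hF) _ (hy F hF),
    fun _ hx _ hy F hF => hF.1.2.2.2 _ (hx F hF) _ (hy F hF)⟩

theorem mem_locFilter_of_sup_eq_one {F : Set α} {y q : α} (hy : y ∉ F) (hq : q ∈ F)
    (h : sup y q = one α) : q ∈ locFilter F :=
  (isImpFilter_gen _).mem_of_le (subset_gen _ ⟨y, hy, q, hq, rfl⟩) h

end MV

/-- `ℓ` is antitone on prime implication filters. -/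
theorem locFilter_antitone {α : Type*} [MV α] (P Q : Set α) (hP : IsPrime P)
    (hQ : IsPrime Q) (hQP : Q ⊆ P) :
    locFilter P ⊆ locFilter Q := by
  refine gen_subset (isImpFilter_gen _) ?_
  rintro _ ⟨x, hx, p, hp, rfl⟩
  have hpx : imp p x ∉ Q := fun h => hx (hP.1.mem_of_imp_mem hp (hQP h))
  have hxp : imp x p ∈ Q :=
    (hQ.2.2 _ _ (sup_imp_imp_eq_one x p ▸ hQ.1.1)).resolve_right hpx
  exact mem_locFilter_of_sup_eq_one hpx hxp (sup_imp_imp_eq_one p x)
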